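/- (Convergence rate for ℓ^p-regularisation, low-order source condition.) Let I be a countable index set, U = ℓ²(I), V a real Hilbert space, F : U → V bounded linear, and 1 < p < 2. Let R : U → ℝ ∪ {+∞} be R(u) = (1/p)Σ_{i∈I}|u_i|^p (with R(u) = +∞ if the sum diverges). Let u† ∈ U with R(u†) < +∞ satisfy Fu† = v†, suppose the vector ξ† with components ξ†_i = u†_i·|u†_i|^(p−2) lies in U and satisfies ξ† = (F*F)^ν ω† for some ω† ∈ U and 0 < ν < 1/2, and fix M > 0 and c > 0. Choose α(δ) = c·δ^(2/(1+2ν)). Then there exists C > 0 such that for all δ > 0, every v^δ with ‖v† − v^δ‖ ≤ δ, and every minimiser u_α^δ of T_{α(δ)}(u) = (1/2)‖Fu − v^δ‖² + α(δ)R(u) with ‖u_α^δ − u†‖ ≤ M, one has ‖u_α^δ − u†‖_{ℓ²} ≤ C·δ^(2ν/(1+2ν)). -/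

import Mathlib

open ContinuousLinearMap
open scoped RealInnerProductSpace

noncomputable section

/-- `P` is the fractional power `T ^ ν` of the (positive self-adjoint) operator `T`, defined
via the continuous functional calculus: there is a continuous star-algebra homomorphism from
`C(σ(T), ℝ)` to the bounded operators mapping the identity function to `T` (such a
homomorphism is unique by Stone–Weierstrass), and `P` is the image of (a continuous extension
of) the function `x ↦ x ^ ν`. -/
def IsFractionalPower {W : Type*} [NormedAddCommGroup W] [InnerProductSpace ℝ W]
    [CompleteSpace W] (T : W →L[ℝ] W) (ν : ℝ) (P : W →L[ℝ] W) : Prop :=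
  ∃ Φ : C(spectrum ℝ T, ℝ) →⋆ₐ[ℝ] (W →L[ℝ] W),
    Continuous Φ ∧
    Φ ((ContinuousMap.id ℝ).restrict (spectrum ℝ T)) = T ∧
    ∃ f : C(ℝ, ℝ), (∀ x ∈ spectrum ℝ T, f x = x ^ ν) ∧
      Φ (f.restrict (spectrum ℝ T)) = P

/-- `ξ` is a subgradient of the extended-real-valued functional `R` at `u`:
`R u < +∞` and `R w ≥ R u + ⟪ξ, w - u⟫` for all `w`. -/
def IsSubgradient {U : Type*} [NormedAddCommGroup U] [InnerProductSpace ℝ U]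
    (R : U → EReal) (ξ u : U) : Prop :=
  R u < ⊤ ∧ ∀ w, R u + ((⟪ξ, w - u⟫ : ℝ) : EReal) ≤ R w

/-- Convexity for extended-real-valued functionals. -/
def ErealConvexOn {U : Type*} [NormedAddCommGroup U] [InnerProductSpace ℝ U]
    (R : U → EReal) : Prop :=
  ∀ u w : U, ∀ t : ℝ, 0 ≤ t → t ≤ 1 →
    R (t • u + (1 - t) • w) ≤ ((t : ℝ) : EReal) * R u + (((1 - t : ℝ)) : EReal) * R w

/-- The Bregman distance `D_ξ(w, u) = R w - R u - ⟪ξ, w - u⟫`. -/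
def Breg {U : Type*} [NormedAddCommGroup U] [InnerProductSpace ℝ U]
    (R : U → EReal) (ξ w u : U) : EReal :=
  R w - R u - ((⟪ξ, w - u⟫ : ℝ) : EReal)

/-- The Tikhonov functional `T_α(u) = (1/2)‖F u - v‖² + α R(u)`. -/
def Tik {U V : Type*} [NormedAddCommGroup U] [InnerProductSpace ℝ U]
    [NormedAddCommGroup V] [InnerProductSpace ℝ V]
    (F : U →L[ℝ] V) (R : U → EReal) (α : ℝ) (v : V) (u : U) : EReal :=
  (((1 : ℝ) / 2 * ‖F u - v‖ ^ 2 : ℝ) : EReal) + ((α : ℝ) : EReal) * R u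

open Classical in
/-- The `ℓ^p` regularisation functional `R(u) = (1/p) Σ_i |u_i|^p` on `ℓ²(I)`,
with value `+∞` if the sum diverges. -/
def Rlp {I : Type*} (p : ℝ) (u : lp (fun _ : I => ℝ) 2) : EReal :=
  if Summable fun i => |u i| ^ p then ((1 / p * ∑' i, |u i| ^ p : ℝ) : EReal) else ⊤

/-!
On the ball `‖u - u†‖ ≤ M` every coordinate is bounded by `ρ = ‖u†‖ + M`, and on `[-ρ, ρ]` the
function `|t| ^ p` has second derivative at least `p (p - 1) ρ ^ (p - 2)`; summing the resulting
Taylor bound over the coordinates shows that the Bregman distance of `R` at `u†` dominates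
`κ ‖u - u†‖²`. Comparing `T_α(u_α^δ)` with `T_α(u†)` then bounds `κ ‖e‖²` by `δ² / α` plus the
source term `-⟪ξ†, e⟫ = -⟪ω†, (F*F)^ν e⟫`. The scalar inequality
`x ^ (2ν) ≤ s ^ (2ν - 1) x + s ^ (2ν)` on the spectrum of `F*F` gives
`‖(F*F)^ν e‖ ≤ s ^ (ν - 1/2) ‖F e‖ + s ^ ν ‖e‖`, and with `s = α / c = δ ^ (2 / (1 + 2ν))` every
term of the bound is of order `δ ^ (4ν / (1 + 2ν))`.
-/

open Set

theorem rpow_le_rpow_sub_one_mul_add_rpow {θ s x : ℝ} (hθ0 : 0 ≤ θ) (hθ1 : θ ≤ 1) (hs : 0 < s)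
    (hx : 0 ≤ x) : x ^ θ ≤ s ^ (θ - 1) * x + s ^ θ := by
  rcases le_total x s with hxs | hsx
  · have : 0 ≤ s ^ (θ - 1) * x := by positivity
    linarith [Real.rpow_le_rpow hx hxs hθ0]
  · have hx0 : 0 < x := hs.trans_le hsx
    have hsplit : x ^ θ = x ^ (θ - 1) * x := by
      rw [← Real.rpow_add_one hx0.ne', sub_add_cancel]
    have : x ^ (θ - 1) ≤ s ^ (θ - 1) := Real.rpow_le_rpow_of_nonpos hs hsx (by linarith)
    nlinarith [Real.rpow_nonneg hs.le θ]

theorem ConvexOn.add_mul_sub_le_of_hasDerivAt {S : Set ℝ} {f : ℝ → ℝ} {a b f' : ℝ}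
    (hf : ConvexOn ℝ S f) (ha : a ∈ S) (hb : b ∈ S) (hf' : HasDerivAt f f' b) :
    f b + f' * (a - b) ≤ f a := by
  rcases lt_trichotomy a b with hab | rfl | hab
  · have := hf.slope_le_of_hasDerivAt ha hb hab hf'
    rw [slope_def_field, div_le_iff₀ (sub_pos.2 hab)] at this
    linarith
  · simp
  · have := hf.le_slope_of_hasDerivAt hb ha hab hf'
    rw [slope_def_field, le_div_iff₀ (sub_pos.2 hab)] at this
    linarith

theorem Function.Odd.monotoneOn_Icc_neg {α β : Type*} [AddCommGroup α] [LinearOrder α]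
    [IsOrderedAddMonoid α] [AddCommGroup β] [PartialOrder β] [IsOrderedAddMonoid β]
    {f : α → β} (hf : f.Odd) {R : α} (h : MonotoneOn f (Icc 0 R)) :
    MonotoneOn f (Icc (-R) R) := by
  rcases lt_or_ge R 0 with hR | hR
  · rw [Icc_eq_empty (by simpa using hR.trans (neg_pos.2 hR))]
    exact fun _ h => h.elim
  have hneg : MonotoneOn f (Icc (-R) 0) := by
    intro x hx y hy hxy
    have := h ⟨neg_nonneg.2 hy.2, neg_le.1 hy.1⟩ ⟨neg_nonneg.2 hx.2, neg_le.1 hx.1⟩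
      (neg_le_neg hxy)
    rwa [hf, hf, neg_le_neg_iff] at this
  rw [← Icc_union_Icc_eq_Icc (neg_nonpos.2 hR) hR]
  exact hneg.union_right h (isGreatest_Icc (neg_nonpos.2 hR)) (isLeast_Icc hR)

theorem monotoneOn_rpow_sub_one_sub_mul {p R : ℝ} (hp1 : 1 < p) (hp2 : p ≤ 2) :
    MonotoneOn (fun t : ℝ => t ^ (p - 1) - (p - 1) * R ^ (p - 2) * t) (Icc 0 R) := by
  have hderiv : ∀ t : ℝ, 0 < t → HasDerivAt (fun t : ℝ => t ^ (p - 1) - (p - 1) * R ^ (p - 2) * t)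
      ((p - 1) * t ^ (p - 2) - (p - 1) * R ^ (p - 2)) t := fun t ht => by
    refine ((Real.hasDerivAt_rpow_const (p := p - 1) (Or.inl ht.ne')).sub
      ((hasDerivAt_id t).const_mul ((p - 1) * R ^ (p - 2)))).congr_deriv ?_
    rw [show p - 1 - 1 = p - 2 by ring, mul_one]
  refine monotoneOn_of_deriv_nonneg (convex_Icc 0 R) ?_ ?_ ?_
  · exact ((continuous_id.rpow_const fun _ => Or.inr (by linarith)).sub
      (continuous_const.mul continuous_id)).continuousOn
  · rw [interior_Icc]
    exact fun t ht => (hderiv t ht.1).differentiableAt.differentiableWithinAt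
  · rw [interior_Icc]
    intro t ht
    rw [(hderiv t ht.1).deriv, ← mul_sub]
    exact mul_nonneg (by linarith)
      (sub_nonneg.2 (Real.rpow_le_rpow_of_nonpos ht.1 ht.2.le (by linarith)))

theorem abs_rpow_tangent_add_sq_le {p R a b : ℝ} (hp1 : 1 < p) (hp2 : p ≤ 2)
    (ha : |a| ≤ R) (hb : |b| ≤ R) :
    |b| ^ p + p * |b| ^ (p - 2) * b * (a - b) + p * (p - 1) / 2 * R ^ (p - 2) * (a - b) ^ 2
      ≤ |a| ^ p := by
  set κ := p * (p - 1) / 2 * R ^ (p - 2)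
  set D : ℝ → ℝ := fun t => p * |t| ^ (p - 2) * t - 2 * κ * t
  have hderiv : ∀ t, HasDerivAt (fun t : ℝ => |t| ^ p - κ * t ^ 2) (D t) t := fun t => by
    refine ((hasDerivAt_abs_rpow t hp1).sub ((hasDerivAt_pow 2 t).const_mul κ)).congr_deriv ?_
    simp only [D]
    ring
  have hDodd : D.Odd := fun t => by simp only [D, abs_neg]; ring
  have hDmono : MonotoneOn D (Icc (-R) R) := by
    refine hDodd.monotoneOn_Icc_neg ?_
    have hmono := monotoneOn_rpow_sub_one_sub_mul (R := R) hp1 hp2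
    refine MonotoneOn.congr (f₁ := fun t => p * (t ^ (p - 1) - (p - 1) * R ^ (p - 2) * t))
      (fun x hx y hy hxy => mul_le_mul_of_nonneg_left (hmono hx hy hxy) (by linarith))
      fun t ht => ?_
    have : |t| ^ (p - 2) * t = t ^ (p - 1) := by
      rcases ht.1.eq_or_lt with rfl | ht0
      · simp [Real.zero_rpow (by linarith : p - 1 ≠ 0)]
      · rw [abs_of_pos ht0, ← Real.rpow_add_one ht0.ne']
        congr 1
        ring
    simp only [D, κ, mul_assoc, this]
    ring
  have hconvex : ConvexOn ℝ (Icc (-R) R) fun t : ℝ => |t| ^ p - κ * t ^ 2 := by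
    refine MonotoneOn.convexOn_of_deriv (convex_Icc _ _)
      (fun t _ => (hderiv t).continuousAt.continuousWithinAt)
      (fun t _ => (hderiv t).differentiableAt.differentiableWithinAt) ?_
    rw [interior_Icc]
    exact fun x hx y hy hxy => by
      rw [(hderiv x).deriv, (hderiv y).deriv]
      exact hDmono (Ioo_subset_Icc_self hx) (Ioo_subset_Icc_self hy) hxy
  have := hconvex.add_mul_sub_le_of_hasDerivAt (abs_le.1 ha) (abs_le.1 hb) (hderiv b)
  simp only [D] at this
  linarith

namespace lp

variable {I : Type*}

theorem real_inner_eq_tsum (x y : lp (fun _ : I => ℝ) 2) : ⟪x, y⟫ = ∑' i, x i * y i := by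
  simp only [lp.inner_eq_tsum, RCLike.inner_apply', conj_trivial]

theorem summable_apply_mul (x y : lp (fun _ : I => ℝ) 2) : Summable fun i => x i * y i := by
  simpa only [RCLike.inner_apply', conj_trivial] using lp.summable_inner (𝕜 := ℝ) x y

theorem tsum_abs_rpow_tangent_add_sq_le {p R : ℝ} (hp1 : 1 < p) (hp2 : p ≤ 2)
    {u w ξ : lp (fun _ : I => ℝ) 2} (hu : Summable fun i => |u i| ^ p)
    (hw : Summable fun i => |w i| ^ p) (hξ : ∀ i, ξ i = u i * |u i| ^ (p - 2))
    (huR : ∀ i, |u i| ≤ R) (hwR : ∀ i, |w i| ≤ R) :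
    1 / p * ∑' i, |u i| ^ p + ⟪ξ, w - u⟫ + (p - 1) / 2 * R ^ (p - 2) * ‖w - u‖ ^ 2
      ≤ 1 / p * ∑' i, |w i| ^ p := by
  have hp0 : 0 < p := by linarith
  have hinner : Summable fun i => ξ i * (w - u) i := summable_apply_mul ξ (w - u)
  have hsq : Summable fun i => (w - u) i * (w - u) i := summable_apply_mul (w - u) (w - u)
  have hterm : ∀ i, 1 / p * |u i| ^ p + ξ i * (w - u) i
      + (p - 1) / 2 * R ^ (p - 2) * ((w - u) i * (w - u) i) ≤ 1 / p * |w i| ^ p := fun i => by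
    rw [lp.coeFn_sub, Pi.sub_apply, hξ i]
    calc _ = 1 / p * (|u i| ^ p + p * |u i| ^ (p - 2) * u i * (w i - u i)
          + p * (p - 1) / 2 * R ^ (p - 2) * (w i - u i) ^ 2) := by field_simp
      _ ≤ 1 / p * |w i| ^ p := by gcongr; exact abs_rpow_tangent_add_sq_le hp1 hp2 (hwR i) (huR i)
  have := (((hu.mul_left (1 / p)).add hinner).add (hsq.mul_left _)).tsum_le_tsum hterm
    (hw.mul_left (1 / p))
  rwa [Summable.tsum_add ((hu.mul_left _).add hinner) (hsq.mul_left _),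
    Summable.tsum_add (hu.mul_left _) hinner, tsum_mul_left, tsum_mul_left, tsum_mul_left,
    ← real_inner_eq_tsum, ← real_inner_eq_tsum, real_inner_self_eq_norm_sq] at this

end lp

section Tikhonov

variable {I : Type*} {p : ℝ} {u : lp (fun _ : I => ℝ) 2}

theorem Rlp_of_summable (h : Summable fun i => |u i| ^ p) :
    Rlp p u = ((1 / p * ∑' i, |u i| ^ p : ℝ) : EReal) :=
  if_pos h

theorem Rlp_lt_top_iff : Rlp p u < ⊤ ↔ Summable fun i => |u i| ^ p := by
  unfold Rlp
  split_ifs with h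
  · exact iff_of_true (EReal.coe_lt_top _) h
  · exact iff_of_false (lt_irrefl _) h

variable {V : Type*} [NormedAddCommGroup V] [InnerProductSpace ℝ V]
  (F : lp (fun _ : I => ℝ) 2 →L[ℝ] V) (v : V) {α : ℝ}

theorem Tik_Rlp_of_summable (h : Summable fun i => |u i| ^ p) :
    Tik F (Rlp p) α v u = ((1 / 2 * ‖F u - v‖ ^ 2 + α * (1 / p * ∑' i, |u i| ^ p) : ℝ) : EReal) := by
  rw [Tik, Rlp_of_summable h, ← EReal.coe_mul, ← EReal.coe_add]

theorem Tik_Rlp_lt_top_iff (hα : 0 < α) :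
    Tik F (Rlp p) α v u < ⊤ ↔ Summable fun i => |u i| ^ p := by
  refine ⟨fun h => ?_, fun h => Tik_Rlp_of_summable F v h ▸ EReal.coe_lt_top _⟩
  by_contra hu
  rw [Tik, Rlp, if_neg hu, EReal.coe_mul_top_of_pos hα, EReal.coe_add_top] at h
  exact lt_irrefl _ h

end Tikhonov

section FunctionalCalculus

variable {W : Type*} [NormedAddCommGroup W] [InnerProductSpace ℝ W] [CompleteSpace W]

theorem StarAlgHom.isPositive_apply_of_nonneg {X : Type*} [TopologicalSpace X]
    (Φ : C(X, ℝ) →⋆ₐ[ℝ] (W →L[ℝ] W)) {g : C(X, ℝ)} (hg : ∀ x, 0 ≤ g x) : (Φ g).IsPositive := by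
  let k : C(X, ℝ) := ⟨fun x => √(g x), by fun_prop⟩
  have hk : Φ g = adjoint (Φ k) ∘L Φ k := by
    have : g = star k * k := ContinuousMap.ext fun x => (Real.mul_self_sqrt (hg x)).symm
    rw [this, map_mul, map_star, star_eq_adjoint]
    rfl
  rw [hk]
  exact isPositive_adjoint_comp_self _

variable {T P : W →L[ℝ] W} {ν : ℝ}

theorem IsFractionalPower.isSelfAdjoint (hP : IsFractionalPower T ν P) : IsSelfAdjoint P := by
  obtain ⟨Φ, -, -, f, -, rfl⟩ := hP
  exact (IsSelfAdjoint.all _).map Φ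

theorem IsFractionalPower.norm_sq_apply_le (hP : IsFractionalPower T ν P) (hT : T.IsPositive)
    (hν0 : 0 ≤ ν) (hν1 : ν ≤ 1 / 2) {s : ℝ} (hs : 0 < s) (e : W) :
    ‖P e‖ ^ 2 ≤ s ^ (2 * ν - 1) * ⟪T e, e⟫ + s ^ (2 * ν) * ‖e‖ ^ 2 := by
  have hPsa := hP.isSelfAdjoint
  obtain ⟨Φ, -, hΦT, f, hf, hΦP⟩ := hP
  have hspec := SpectrumRestricts.nnreal_iff.mp hT.spectrumRestricts
  set fr := f.restrict (spectrum ℝ T)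
  set g : C(spectrum ℝ T, ℝ) := s ^ (2 * ν - 1) • (ContinuousMap.id ℝ).restrict (spectrum ℝ T)
    + s ^ (2 * ν) • 1 - fr * fr with hgdef
  have hg : ∀ x, 0 ≤ g x := fun ⟨x, hx⟩ => by
    have hfx : fr ⟨x, hx⟩ * fr ⟨x, hx⟩ = x ^ (2 * ν) := by
      rw [ContinuousMap.restrict_apply, hf x hx, ← sq, ← Real.rpow_mul_natCast (hspec x hx)]
      ring_nf
    have := rpow_le_rpow_sub_one_mul_add_rpow (θ := 2 * ν) (by linarith) (by linarith) hs
      (hspec x hx)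
    simp only [hgdef, ContinuousMap.sub_apply, ContinuousMap.add_apply, ContinuousMap.smul_apply,
      ContinuousMap.mul_apply, hfx, ContinuousMap.restrict_apply, ContinuousMap.id_apply,
      ContinuousMap.one_apply, smul_eq_mul, mul_one]
    linarith
  have hΦg : Φ g = s ^ (2 * ν - 1) • T + s ^ (2 * ν) • 1 - P ∘L P := by
    simp only [hgdef, map_sub, map_add, map_smul, map_one, map_mul, hΦT, hΦP]
    rfl
  have hPP : ⟪(P ∘L P) e, e⟫ = ‖P e‖ ^ 2 := by
    rw [comp_apply, ← hPsa.adjoint_eq, adjoint_inner_left, hPsa.adjoint_eq,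
      real_inner_self_eq_norm_sq]
  have := (StarAlgHom.isPositive_apply_of_nonneg Φ hg).inner_nonneg_left e
  rw [hΦg, sub_apply, inner_sub_left, hPP, add_apply, inner_add_left, smul_apply, smul_apply,
    one_apply_eq_self, real_inner_smul_left, real_inner_smul_left, real_inner_self_eq_norm_sq] at this
  linarith

theorem IsFractionalPower.norm_apply_le {V : Type*} [NormedAddCommGroup V]
    [InnerProductSpace ℝ V] [CompleteSpace V] {F : W →L[ℝ] V}
    (hP : IsFractionalPower (adjoint F ∘L F) ν P) (hν0 : 0 ≤ ν) (hν1 : ν ≤ 1 / 2) {s : ℝ}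
    (hs : 0 < s) (e : W) : ‖P e‖ ≤ s ^ (ν - 1 / 2) * ‖F e‖ + s ^ ν * ‖e‖ := by
  have h := hP.norm_sq_apply_le (isPositive_adjoint_comp_self F) hν0 hν1 hs e
  have hsq : ∀ y : ℝ, s ^ (2 * y) = (s ^ y) ^ 2 := fun y => by
    rw [← Real.rpow_mul_natCast hs.le]
    ring_nf
  rw [comp_apply, adjoint_inner_left, real_inner_self_eq_norm_sq,
    show 2 * ν - 1 = 2 * (ν - 1 / 2) by ring, hsq, hsq] at h
  refine (pow_le_pow_iff_left₀ (norm_nonneg _) (by positivity) two_ne_zero).1 (h.trans ?_)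
  nlinarith [mul_nonneg (mul_nonneg (Real.rpow_nonneg hs.le (ν - 1 / 2)) (norm_nonneg (F e)))
    (mul_nonneg (Real.rpow_nonneg hs.le ν) (norm_nonneg e))]

end FunctionalCalculus

theorem tikhonov_error_sq_le {U V : Type*} [NormedAddCommGroup U] [InnerProductSpace ℝ U]
    [CompleteSpace U] [NormedAddCommGroup V] [InnerProductSpace ℝ V] (F : U →L[ℝ] V)
    {P : U →L[ℝ] U} (hP : IsSelfAdjoint P) {u₀ u ω : U} {v : V} {α κ δ a b r₀ r : ℝ}
    (hα : 0 < α) (hκ : 0 < κ) (ha : 0 ≤ a) (hδ : ‖F u₀ - v‖ ≤ δ)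
    (hmin : 1 / 2 * ‖F u - v‖ ^ 2 + α * r ≤ 1 / 2 * ‖F u₀ - v‖ ^ 2 + α * r₀)
    (hbreg : r₀ + ⟪P ω, u - u₀⟫ + κ * ‖u - u₀‖ ^ 2 ≤ r)
    (hinterp : ‖P (u - u₀)‖ ≤ a * ‖F (u - u₀)‖ + b * ‖u - u₀‖) :
    κ * ‖u - u₀‖ ^ 2 ≤ δ ^ 2 / α + α * (‖ω‖ * a) ^ 2 + 2 * ‖ω‖ * a * δ + (‖ω‖ * b) ^ 2 / κ := by
  set e := u - u₀
  set t := ‖F u - v‖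
  have hFe : ‖F e‖ ≤ t + δ :=
    calc ‖F e‖ = ‖(F u - v) - (F u₀ - v)‖ := by rw [map_sub, sub_sub_sub_cancel_right]
      _ ≤ t + δ := (norm_sub_le _ _).trans (by gcongr)
  have hsource : -⟪P ω, e⟫ ≤ ‖ω‖ * (a * (t + δ) + b * ‖e‖) := by
    rw [← hP.adjoint_eq, adjoint_inner_left]
    calc -⟪ω, P e⟫ ≤ ‖ω‖ * ‖P e‖ := (neg_le_abs _).trans (abs_real_inner_le_norm _ _)
      _ ≤ _ := by gcongr; exact hinterp.trans (by gcongr)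
  have hyoung₁ : α * ‖ω‖ * a * t ≤ 1 / 2 * t ^ 2 + 1 / 2 * (α * (α * (‖ω‖ * a) ^ 2)) := by
    nlinarith [sq_nonneg (t - α * ‖ω‖ * a)]
  have hyoung₂ : ‖ω‖ * b * ‖e‖ ≤ 1 / 2 * κ * ‖e‖ ^ 2 + 1 / 2 * ((‖ω‖ * b) ^ 2 / κ) := by
    have : 1 / 2 * κ * ‖e‖ ^ 2 + 1 / 2 * ((‖ω‖ * b) ^ 2 / κ) - ‖ω‖ * b * ‖e‖
        = (κ * ‖e‖ - ‖ω‖ * b) ^ 2 / (2 * κ) := by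
      field_simp
      ring
    rw [← sub_nonneg, this]
    positivity
  have hvar : 1 / 2 * t ^ 2 + α * ⟪P ω, e⟫ + α * κ * ‖e‖ ^ 2 ≤ 1 / 2 * δ ^ 2 := by
    have hδ2 : ‖F u₀ - v‖ ^ 2 ≤ δ ^ 2 := pow_le_pow_left₀ (norm_nonneg _) hδ 2
    linarith [mul_le_mul_of_nonneg_left hbreg hα.le]
  have hscaled : α * (κ * ‖e‖ ^ 2)
      ≤ δ ^ 2 + α * (α * (‖ω‖ * a) ^ 2 + 2 * ‖ω‖ * a * δ + (‖ω‖ * b) ^ 2 / κ) := by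
    have : -(α * ⟪P ω, e⟫) ≤ α * ‖ω‖ * a * t + α * ‖ω‖ * a * δ + α * (‖ω‖ * b * ‖e‖) := by
      linarith [mul_le_mul_of_nonneg_left hsource hα.le]
    linarith [mul_le_mul_of_nonneg_left hyoung₂ hα.le]
  calc κ * ‖e‖ ^ 2 = α * (κ * ‖e‖ ^ 2) / α := by field_simp
    _ ≤ (δ ^ 2 + α * (α * (‖ω‖ * a) ^ 2 + 2 * ‖ω‖ * a * δ + (‖ω‖ * b) ^ 2 / κ)) / α := by
      gcongr
    _ = _ := by field_simp; ring

theorem rate_of_apriori_parameter_choice {c ν κ w δ E : ℝ} (hc : 0 < c) (hκ : 0 < κ)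
    (hw : 0 ≤ w) (hν : 0 < 1 + 2 * ν) (hδ : 0 < δ) (hE : 0 ≤ E)
    (h : κ * E ^ 2 ≤ δ ^ 2 / (c * δ ^ (2 / (1 + 2 * ν)))
      + c * δ ^ (2 / (1 + 2 * ν)) * (w * (δ ^ (2 / (1 + 2 * ν))) ^ (ν - 1 / 2)) ^ 2
      + 2 * w * (δ ^ (2 / (1 + 2 * ν))) ^ (ν - 1 / 2) * δ
      + (w * (δ ^ (2 / (1 + 2 * ν))) ^ ν) ^ 2 / κ) :
    E ≤ √((1 / c + c * w ^ 2 + 2 * w + w ^ 2 / κ) / κ) * δ ^ (2 * ν / (1 + 2 * ν)) := by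
  set s := δ ^ (2 / (1 + 2 * ν))
  have hs : 0 < s := by positivity
  set r := s ^ (1 / 2 : ℝ)
  have hr : 0 < r := by positivity
  have hsr : s = r ^ 2 := by
    rw [← Real.rpow_mul_natCast hs.le]
    norm_num
  have hb : δ ^ (2 * ν / (1 + 2 * ν)) = s ^ ν := by
    rw [← Real.rpow_mul hδ.le]
    congr 1
    field_simp
  have hδs : δ = s ^ ν * r := by
    rw [← Real.rpow_add hs, ← Real.rpow_mul hδ.le]
    conv_lhs => rw [← Real.rpow_one δ]
    congr 1
    field_simp
    ring
  have ha : s ^ (ν - 1 / 2) = s ^ ν / r := Real.rpow_sub hs _ _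
  set b := s ^ ν
  rw [ha, hδs] at h
  rw [hb, ← pow_le_pow_iff_left₀ hE (by positivity) two_ne_zero, mul_pow,
    Real.sq_sqrt (by positivity), div_mul_eq_mul_div, le_div_iff₀ hκ]
  clear_value b r s
  subst hsr
  rw [mul_comm]
  refine h.trans_eq ?_
  field_simp

theorem lp_regularisation_rate_general {I : Type*}
    {V : Type*} [NormedAddCommGroup V] [InnerProductSpace ℝ V] [CompleteSpace V]
    (p : ℝ) (hp1 : 1 < p) (hp2 : p < 2)
    (F : lp (fun _ : I => ℝ) 2 →L[ℝ] V)
    (udag : lp (fun _ : I => ℝ) 2) (hfin : Rlp p udag < ⊤)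
    (vdag : V) (hud : F udag = vdag)
    (ξdag : lp (fun _ : I => ℝ) 2)
    (hξcomp : ∀ i, ξdag i = udag i * |udag i| ^ (p - 2))
    (ν : ℝ) (hν0 : 0 < ν) (hν1 : ν < 1 / 2)
    (P : lp (fun _ : I => ℝ) 2 →L[ℝ] lp (fun _ : I => ℝ) 2)
    (hP : IsFractionalPower ((adjoint F).comp F) ν P)
    (ωdag : lp (fun _ : I => ℝ) 2) (hsource : ξdag = P ωdag)
    (M c : ℝ) (hM : 0 < M) (hc : 0 < c) :
    ∃ C : ℝ, 0 < C ∧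
      ∀ δ : ℝ, 0 < δ → ∀ vδ : V, ‖vdag - vδ‖ ≤ δ →
        ∀ uαδ : lp (fun _ : I => ℝ) 2,
          (∀ u, Tik F (Rlp p) (c * δ ^ (2 / (1 + 2 * ν))) vδ uαδ
              ≤ Tik F (Rlp p) (c * δ ^ (2 / (1 + 2 * ν))) vδ u) →
          ‖uαδ - udag‖ ≤ M →
          ‖uαδ - udag‖ ≤ C * δ ^ (2 * ν / (1 + 2 * ν)) := by
  have hu := Rlp_lt_top_iff.1 hfin
  obtain ⟨R, hR⟩ : ∃ R, R = ‖udag‖ + M := ⟨_, rfl⟩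
  obtain ⟨κ, hκR⟩ : ∃ κ, κ = (p - 1) / 2 * R ^ (p - 2) := ⟨_, rfl⟩
  have hκ : 0 < κ := by
    have : 0 < R := by rw [hR]; positivity
    have : 0 < p - 1 := by linarith
    rw [hκR]
    positivity
  set w := ‖ωdag‖
  refine ⟨√((1 / c + c * w ^ 2 + 2 * w + w ^ 2 / κ) / κ), by positivity,
    fun δ hδ vδ hvδ uα hmin hdist => ?_⟩
  have hα : 0 < c * δ ^ (2 / (1 + 2 * ν)) := by positivity
  have huα := (Tik_Rlp_lt_top_iff F vδ hα).1
    ((hmin udag).trans_lt ((Tik_Rlp_lt_top_iff F vδ hα).2 hu))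
  have hTik := hmin udag
  rw [Tik_Rlp_of_summable F vδ huα, Tik_Rlp_of_summable F vδ hu, EReal.coe_le_coe_iff] at hTik
  have hbreg := lp.tsum_abs_rpow_tangent_add_sq_le (R := R) hp1 hp2.le hu huα hξcomp
    (fun i => (lp.norm_apply_le_norm two_ne_zero udag i).trans (by linarith))
    (fun i => (lp.norm_apply_le_norm two_ne_zero uα i).trans
      ((norm_le_norm_add_norm_sub' uα udag).trans (by linarith)))
  rw [hsource, ← hκR] at hbreg
  have herr := tikhonov_error_sq_le F hP.isSelfAdjoint hα hκ (by positivity) (hud ▸ hvδ) hTik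
    hbreg (hP.norm_apply_le hν0.le hν1.le (s := δ ^ (2 / (1 + 2 * ν))) (by positivity) _)
  exact rate_of_apriori_parameter_choice hc hκ (norm_nonneg _) (by linarith) hδ (norm_nonneg _)
    (by simpa only [mul_pow, mul_assoc] using herr)

/-- convergence rate for `ℓ^p`-regularisation (`1 < p < 2`) under a low-order
source condition, with `α(δ) = c δ^(2/(1+2ν))`. -/
theorem lp_regularisation_rate {I : Type*} [Countable I]
    {V : Type*} [NormedAddCommGroup V] [InnerProductSpace ℝ V] [CompleteSpace V]
    (p : ℝ) (hp1 : 1 < p) (hp2 : p < 2)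
    (F : lp (fun _ : I => ℝ) 2 →L[ℝ] V)
    (udag : lp (fun _ : I => ℝ) 2) (hfin : Rlp p udag < ⊤)
    (vdag : V) (hud : F udag = vdag)
    (ξdag : lp (fun _ : I => ℝ) 2)
    (hξcomp : ∀ i, ξdag i = udag i * |udag i| ^ (p - 2))
    (ν : ℝ) (hν0 : 0 < ν) (hν1 : ν < 1 / 2)
    (P : lp (fun _ : I => ℝ) 2 →L[ℝ] lp (fun _ : I => ℝ) 2)
    (hP : IsFractionalPower ((adjoint F).comp F) ν P)
    (ωdag : lp (fun _ : I => ℝ) 2) (hsource : ξdag = P ωdag)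
    (M c : ℝ) (hM : 0 < M) (hc : 0 < c) :
    ∃ C : ℝ, 0 < C ∧
      ∀ δ : ℝ, 0 < δ → ∀ vδ : V, ‖vdag - vδ‖ ≤ δ →
        ∀ uαδ : lp (fun _ : I => ℝ) 2,
          (∀ u, Tik F (Rlp p) (c * δ ^ (2 / (1 + 2 * ν))) vδ uαδ
              ≤ Tik F (Rlp p) (c * δ ^ (2 / (1 + 2 * ν))) vδ u) →
          ‖uαδ - udag‖ ≤ M →
          ‖uαδ - udag‖ ≤ C * δ ^ (2 * ν / (1 + 2 * ν)) :=
  lp_regularisation_rate_general p hp1 hp2 F udag hfin vdag hud ξdag hξcomp ν hν0 hν1 P hP ωdag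
    hsource M c hM hc
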